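/- arXiv:2208.06406 — 3 statements merged into one kernel-verified Lean document; each statement's English description precedes it below -/
import Mathlib

section
/- If p : ℝ → ℝ is a probability density function (nonnegative, integrable with integral 1) that is everywhere positive and twice continuously differentiable, and the second derivative of log p is a constant κ, then κ < 0 and p is a Gaussian density, i.e., there exist μ ∈ ℝ and σ > 0 such that p(x) = (1/(σ√(2π))) exp(-(x-μ)²/(2σ²)) for all x. -/
/-!
Since `(log p)'' = κ`, integrating twice shows that `p` is the exponential of a quadratic
polynomial with leading coefficient `κ / 2`. If `κ ≥ 0`, this exponential stays above `p 0 > 0`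
on a half-line, so it is not integrable; hence `κ < 0`. Completing the square then writes `p` as a
multiple of a Gaussian kernel, and `∫ p = 1` fixes the multiple as the Gaussian normalisation.
-/

open MeasureTheory Real

theorem sub_eq_sub_of_deriv_eq_of_hasDerivAt {f g g' : ℝ → ℝ} (hf : Differentiable ℝ f)
    (hg : ∀ x, HasDerivAt g (g' x) x) (hfg : ∀ x, deriv f x = g' x) (x y : ℝ) :
    f x - f y = g x - g y := by
  have hconst : f x - g x = f y - g y :=
    is_const_of_deriv_eq_zero (hf.sub fun x => (hg x).differentiableAt)
      (fun x => by rw [deriv_sub (hf x) (hg x).differentiableAt, (hg x).deriv, hfg, sub_self]) x y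
  linarith

theorem eq_quadratic_of_deriv_deriv_eq_const {f : ℝ → ℝ} {κ : ℝ} (hf : ContDiff ℝ 2 f)
    (hf'' : ∀ x, deriv (deriv f) x = κ) (x : ℝ) :
    f x = κ / 2 * x ^ 2 + deriv f 0 * x + f 0 := by
  obtain ⟨hf_diff, -, hf'_contDiff⟩ := (contDiff_succ_iff_deriv (n := 1)).mp hf
  have hf' : ∀ x, deriv f x = κ * x + deriv f 0 := fun x => by
    have := sub_eq_sub_of_deriv_eq_of_hasDerivAt (hf'_contDiff.differentiable one_ne_zero)
      (fun _ => hasDerivAt_mul_const κ) hf'' x 0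
    linarith
  have hquad : ∀ x, HasDerivAt (fun x => κ / 2 * x ^ 2 + deriv f 0 * x) (κ * x + deriv f 0) x :=
    fun x => ((hasDerivAt_pow 2 x).const_mul (κ / 2)).fun_add
      ((hasDerivAt_id' x).const_mul (deriv f 0)) |>.congr_deriv (by push_cast; ring)
  have := sub_eq_sub_of_deriv_eq_of_hasDerivAt hf_diff hquad hf' x 0
  linarith

theorem not_integrable_exp_quadratic {a : ℝ} (ha : 0 ≤ a) (b c : ℝ) :
    ¬ Integrable fun x => exp (a * x ^ 2 + b * x + c) := by
  intro h
  have hfin := h.measure_ge_lt_top (exp_pos c)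
  rcases le_total 0 b with hb | hb
  · have hsub : Set.Ici 0 ⊆ {x | exp c ≤ exp (a * x ^ 2 + b * x + c)} :=
      fun x (hx : 0 ≤ x) => exp_le_exp.mpr (by nlinarith [sq_nonneg x])
    exact ((measure_mono hsub).trans_lt hfin).ne volume_Ici
  · have hsub : Set.Iic 0 ⊆ {x | exp c ≤ exp (a * x ^ 2 + b * x + c)} :=
      fun x (hx : x ≤ 0) => exp_le_exp.mpr (by nlinarith [sq_nonneg x])
    exact ((measure_mono hsub).trans_lt hfin).ne volume_Iic

theorem exp_quadratic_eq_mul_exp_neg_sq_div {a : ℝ} (ha : a ≠ 0) (b c x : ℝ) :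
    exp (a / 2 * x ^ 2 + b * x + c) =
      exp (c - b ^ 2 / (2 * a)) * exp (-(x - -b / a) ^ 2 / (2 * (-a)⁻¹)) := by
  rw [← exp_add]
  congr 1
  field_simp
  ring

theorem integral_exp_neg_sq_div {σ : ℝ} (hσ : 0 < σ) (μ : ℝ) :
    ∫ x, exp (-(x - μ) ^ 2 / (2 * σ ^ 2)) = σ * √(2 * π) := by
  have hshift :
      ∫ x, exp (-(x - μ) ^ 2 / (2 * σ ^ 2)) = ∫ x, exp (-(2 * σ ^ 2)⁻¹ * x ^ 2) := by
    rw [← integral_sub_right_eq_self (fun x => exp (-(2 * σ ^ 2)⁻¹ * x ^ 2)) μ]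
    congr with x
    field_simp
  rw [hshift, integral_gaussian, show π / (2 * σ ^ 2)⁻¹ = σ ^ 2 * (2 * π) by field_simp,
    sqrt_mul (sq_nonneg σ), sqrt_sq hσ.le]

theorem stmt_0_general (p : ℝ → ℝ) (κ : ℝ)
    (hint : Integrable p)
    (hone : ∫ x, p x = 1)
    (hpos : ∀ x, 0 < p x)
    (hsmooth : ContDiff ℝ 2 p)
    (hlog : ∀ x, deriv (deriv (fun y => Real.log (p y))) x = κ) :
    κ < 0 ∧ ∃ μ σ : ℝ, 0 < σ ∧
      ∀ x, p x = (σ * Real.sqrt (2 * π))⁻¹ * Real.exp (-(x - μ) ^ 2 / (2 * σ ^ 2)) := by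
  set b := deriv (fun y => log (p y)) 0
  set c := log (p 0)
  have hp : ∀ x, p x = exp (κ / 2 * x ^ 2 + b * x + c) := fun x => by
    rw [← eq_quadratic_of_deriv_deriv_eq_const (hsmooth.log fun x => (hpos x).ne') hlog x,
      exp_log (hpos x)]
  have hκ : κ < 0 := by
    by_contra! hκ
    exact not_integrable_exp_quadratic (a := κ / 2) (by linarith) b c
      (by simpa only [← hp] using hint)
  set σ := (√(-κ))⁻¹
  have hσ : 0 < σ := inv_pos.mpr (sqrt_pos.mpr (neg_pos.mpr hκ))
  have hσ_sq : σ ^ 2 = (-κ)⁻¹ := by rw [inv_pow, sq_sqrt (neg_nonneg.mpr hκ.le)]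
  set A := exp (c - b ^ 2 / (2 * κ))
  have hp_gauss : ∀ x, p x = A * exp (-(x - -b / κ) ^ 2 / (2 * σ ^ 2)) := fun x => by
    rw [hp, exp_quadratic_eq_mul_exp_neg_sq_div hκ.ne, hσ_sq]
  have hA : A = (σ * √(2 * π))⁻¹ := by
    refine eq_inv_of_mul_eq_one_left ?_
    rw [← integral_exp_neg_sq_div hσ, ← integral_const_mul, ← hone]
    exact integral_congr_ae (.of_forall fun x => (hp_gauss x).symm)
  exact ⟨hκ, -b / κ, σ, hσ, fun x => by rw [hp_gauss, hA]⟩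

theorem stmt_0 (p : ℝ → ℝ) (κ : ℝ)
    (hnn : ∀ x, 0 ≤ p x) (hint : Integrable p)
    (hone : ∫ x, p x = 1)
    (hpos : ∀ x, 0 < p x)
    (hsmooth : ContDiff ℝ 2 p)
    (hlog : ∀ x, deriv (deriv (fun y => Real.log (p y))) x = κ) :
    κ < 0 ∧ ∃ μ σ : ℝ, 0 < σ ∧
      ∀ x, p x = (σ * Real.sqrt (2 * π))⁻¹ * Real.exp (-(x - μ) ^ 2 / (2 * σ ^ 2)) :=
  stmt_0_general p κ hint hone hpos hsmooth hlog
end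

section
/- Let Ω ⊆ ℝᵈ be open and connected, and let f : Ω → ℝᵈ be continuously differentiable with Df(x) ∈ O(d) (i.e., Df(x)ᵀ Df(x) = Id) for all x ∈ Ω. Then there exist R ∈ O(d) and b ∈ ℝᵈ such that f(x) = R x + b for all x ∈ Ω. -/
open RealInnerProductSpace Metric Filter Topology

/-! Since `Df` preserves inner products, `‖Df‖ ≤ 1` and the mean value inequality makes `f`
1-Lipschitz on convex subsets of `Ω`; the local inverse given by the inverse function theorem has
derivatives `Df⁻¹`, which preserve inner products as well, so it is 1-Lipschitz too. Hence `f` is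
an isometry on small balls. Polarizing `‖f x - f y‖ = ‖x - y‖` and differentiating at the centre `a`
shows `f y = f a + Df(a) (y - a)` near `a`, so `Df` is locally constant, hence constant on the
connected set `Ω`, and `f` is affine. -/

variable {E F : Type*} [NormedAddCommGroup E] [InnerProductSpace ℝ E]
  [NormedAddCommGroup F] [InnerProductSpace ℝ F]

namespace ContinuousLinearMap

theorem norm_le_one_of_inner_map_map {T : E →L[ℝ] F} (h : ∀ v w, ⟪T v, T w⟫ = ⟪v, w⟫) :
    ‖T‖ ≤ 1 :=
  (T.toLinearMap.isometryOfInner h).norm_toContinuousLinearMap_le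

variable [FiniteDimensional ℝ E]

noncomputable def toLinearIsometryEquivOfInner (T : E →L[ℝ] E)
    (h : ∀ v w, ⟪T v, T w⟫ = ⟪v, w⟫) : E ≃ₗᵢ[ℝ] E :=
  (T.toLinearMap.isometryOfInner h).toLinearIsometryEquiv rfl

@[simp]
theorem coe_toLinearIsometryEquivOfInner (T : E →L[ℝ] E) (h : ∀ v w, ⟪T v, T w⟫ = ⟪v, w⟫) :
    ((T.toLinearIsometryEquivOfInner h).toContinuousLinearEquiv : E →L[ℝ] E) = T :=
  rfl

theorem inner_inverse_inverse {T : E →L[ℝ] E} (h : ∀ v w, ⟪T v, T w⟫ = ⟪v, w⟫) (v w : E) :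
    ⟪T.inverse v, T.inverse w⟫ = ⟪v, w⟫ := by
  rw [← coe_toLinearIsometryEquivOfInner T h, inverse_equiv]
  exact (T.toLinearIsometryEquivOfInner h).symm.inner_map_map v w

end ContinuousLinearMap

open ContinuousLinearMap

theorem Convex.norm_image_sub_le_of_inner_map_map {s : Set E} (hs : Convex ℝ s) {f : E → F}
    {f' : E → E →L[ℝ] F} (hf : ∀ x ∈ s, HasFDerivAt f (f' x) x)
    (horth : ∀ x ∈ s, ∀ v w, ⟪f' x v, f' x w⟫ = ⟪v, w⟫) {x y : E} (hx : x ∈ s) (hy : y ∈ s) :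
    ‖f x - f y‖ ≤ ‖x - y‖ := by
  simpa using hs.norm_image_sub_le_of_norm_hasFDerivWithin_le
    (fun z hz => (hf z hz).hasFDerivWithinAt) (fun z hz => norm_le_one_of_inner_map_map (horth z hz))
    hy hx

theorem inner_sub_eq_of_norm_sub_eq {U : Set E} (hU : IsOpen U) {f : E → F} {L : E →L[ℝ] F}
    {a y : E} (ha : a ∈ U) (hy : y ∈ U) (hf : HasFDerivAt f L a)
    (hiso : ∀ x ∈ U, ∀ y ∈ U, ‖f x - f y‖ = ‖x - y‖) (v : E) :
    ⟪f y - f a, L v⟫ = ⟪y - a, v⟫ := by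
  have hpolar : ∀ x ∈ U, ⟪f y - f a, f x - f a⟫ - ⟪y - a, x - a⟫ = 0 := by
    intro x hx
    rw [real_inner_eq_norm_mul_self_add_norm_mul_self_sub_norm_sub_mul_self_div_two,
      real_inner_eq_norm_mul_self_add_norm_mul_self_sub_norm_sub_mul_self_div_two,
      sub_sub_sub_cancel_right, sub_sub_sub_cancel_right, hiso y hy x hx, hiso y hy a ha,
      hiso x hx a ha, sub_self]
  have hderiv : HasFDerivAt (fun x => ⟪f y - f a, f x - f a⟫ - ⟪y - a, x - a⟫)
      ((innerSL ℝ (f y - f a)).comp L - (innerSL ℝ (y - a)).comp (.id ℝ E)) a :=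
    ((innerSL ℝ (f y - f a)).hasFDerivAt.comp a (hf.sub_const (f a))).sub
      ((innerSL ℝ (y - a)).hasFDerivAt.comp a ((hasFDerivAt_id a).sub_const a))
  have hzero : HasFDerivAt (fun x => ⟪f y - f a, f x - f a⟫ - ⟪y - a, x - a⟫) (0 : E →L[ℝ] ℝ) a :=
    (hasFDerivAt_const _ a).congr_of_eventuallyEq (eventually_of_mem (hU.mem_nhds ha) hpolar)
  simpa only [sub_apply, coe_comp, Function.comp_apply, innerSL_apply_apply, coe_id', id_eq,
    zero_apply, sub_eq_zero] using congr($(hderiv.unique hzero) v)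

theorem eq_add_of_norm_sub_eq {U : Set E} (hU : IsOpen U) {f : E → F} {L : E →L[ℝ] F}
    {a y : E} (ha : a ∈ U) (hy : y ∈ U) (hf : HasFDerivAt f L a)
    (hL : ∀ v w, ⟪L v, L w⟫ = ⟪v, w⟫) (hiso : ∀ x ∈ U, ∀ y ∈ U, ‖f x - f y‖ = ‖x - y‖) :
    f y = f a + L (y - a) := by
  have hL_norm : ‖L (y - a)‖ ^ 2 = ‖y - a‖ ^ 2 := by
    rw [← real_inner_self_eq_norm_sq, ← real_inner_self_eq_norm_sq, hL]
  have h : ‖f y - f a - L (y - a)‖ ^ 2 = 0 := by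
    rw [norm_sub_sq_real, inner_sub_eq_of_norm_sub_eq hU ha hy hf hiso, hiso y hy a ha, hL_norm,
      real_inner_self_eq_norm_sq]
    ring
  rwa [sq_eq_zero_iff, norm_eq_zero, sub_sub, sub_eq_zero] at h

theorem exists_mem_nhds_norm_sub_le_norm_image_sub [FiniteDimensional ℝ E] {Ω : Set E}
    (hΩ : IsOpen Ω) {f : E → E} {f' : E → E →L[ℝ] E} (hderiv : ∀ x ∈ Ω, HasFDerivAt f (f' x) x)
    (hcont : ContinuousOn f' Ω) (horth : ∀ x ∈ Ω, ∀ v w, ⟪f' x v, f' x w⟫ = ⟪v, w⟫)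
    {a : E} (ha : a ∈ Ω) : ∃ U ∈ 𝓝 a, ∀ x ∈ U, ∀ y ∈ U, ‖x - y‖ ≤ ‖f x - f y‖ := by
  have hstrict : HasStrictFDerivAt f
      (((f' a).toLinearIsometryEquivOfInner (horth a ha)).toContinuousLinearEquiv : E →L[ℝ] E) a :=
    hasStrictFDerivAt_of_hasFDerivAt_of_continuousAt (eventually_of_mem (hΩ.mem_nhds ha) hderiv)
      (hcont.continuousAt (hΩ.mem_nhds ha))
  set P := hstrict.toOpenPartialHomeomorph f
  have hPf : ⇑P = f := hstrict.toOpenPartialHomeomorph_coe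
  have haP : a ∈ P.source := hstrict.mem_toOpenPartialHomeomorph_source
  have hfa : f a ∈ P.target := hPf ▸ P.map_source haP
  have hinv : ∀ᶠ y in 𝓝 (f a), P.symm y ∈ Ω ∧ HasFDerivAt P.symm (f' (P.symm y)).inverse y := by
    have hΩ_nhds : Ω ∈ 𝓝 (P.symm (f a)) := by
      rw [← hPf, P.left_inv haP]
      exact hΩ.mem_nhds ha
    filter_upwards [P.open_target.mem_nhds hfa, P.continuousAt_symm hfa hΩ_nhds] with y hyP hyΩ
    refine ⟨hyΩ, ?_⟩
    rw [← coe_toLinearIsometryEquivOfInner _ (horth _ hyΩ), inverse_equiv]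
    exact P.hasFDerivAt_symm hyP (hPf ▸ hderiv _ hyΩ)
  obtain ⟨δ, hδ, hδinv⟩ := Metric.eventually_nhds_iff_ball.1 hinv
  refine ⟨P.source ∩ f ⁻¹' ball (f a) δ, inter_mem (P.open_source.mem_nhds haP)
    ((hderiv a ha).continuousAt.preimage_mem_nhds (ball_mem_nhds _ hδ)), ?_⟩
  rintro x ⟨hxP, hxδ⟩ y ⟨hyP, hyδ⟩
  calc ‖x - y‖ = ‖P.symm (f x) - P.symm (f y)‖ := by rw [← hPf, P.left_inv hxP, P.left_inv hyP]
    _ ≤ ‖f x - f y‖ := (convex_ball _ _).norm_image_sub_le_of_inner_map_map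
      (fun y hy => (hδinv y hy).2) (fun y hy => inner_inverse_inverse (horth _ (hδinv y hy).1))
      hxδ hyδ

theorem eventually_fderiv_eq_of_inner_map_map [FiniteDimensional ℝ E] {Ω : Set E}
    (hΩ : IsOpen Ω) {f : E → E} {f' : E → E →L[ℝ] E} (hderiv : ∀ x ∈ Ω, HasFDerivAt f (f' x) x)
    (hcont : ContinuousOn f' Ω) (horth : ∀ x ∈ Ω, ∀ v w, ⟪f' x v, f' x w⟫ = ⟪v, w⟫)
    {a : E} (ha : a ∈ Ω) : ∀ᶠ x in 𝓝 a, f' x = f' a := by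
  obtain ⟨U, hU, hlower⟩ := exists_mem_nhds_norm_sub_le_norm_image_sub hΩ hderiv hcont horth ha
  obtain ⟨ε, hε, hball⟩ := Metric.mem_nhds_iff.1 (inter_mem hU (hΩ.mem_nhds ha))
  have hiso : ∀ x ∈ ball a ε, ∀ y ∈ ball a ε, ‖f x - f y‖ = ‖x - y‖ := fun x hx y hy =>
    le_antisymm
      ((convex_ball a ε).norm_image_sub_le_of_inner_map_map (fun z hz => hderiv z (hball hz).2)
        (fun z hz => horth z (hball hz).2) hx hy)
      (hlower x (hball hx).1 y (hball hy).1)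
  have haffine : ∀ y ∈ ball a ε, f y = f a + (f' a y - f' a a) := fun y hy => by
    rw [← map_sub]
    exact eq_add_of_norm_sub_eq isOpen_ball (mem_ball_self hε) hy (hderiv a ha) (horth a ha) hiso
  filter_upwards [ball_mem_nhds a hε] with x hx
  refine (hderiv x (hball hx).2).unique ?_
  exact (((f' a).hasFDerivAt.sub_const (f' a a)).const_add (f a)).congr_of_eventuallyEq
    (eventually_of_mem (isOpen_ball.mem_nhds hx) haffine)

theorem IsOpen.exists_eq_add_of_eventually_eq_fderiv {Ω : Set E} (hΩ : IsOpen Ω)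
    (hconn : IsPreconnected Ω) {f : E → F} {f' : E → E →L[ℝ] F}
    (hderiv : ∀ x ∈ Ω, HasFDerivAt f (f' x) x) (hloc : ∀ a ∈ Ω, ∀ᶠ x in 𝓝 a, f' x = f' a)
    {a : E} (ha : a ∈ Ω) : ∃ b, ∀ x ∈ Ω, f x = f' a x + b := by
  have hf'_deriv : ∀ y ∈ Ω, HasFDerivAt f' (0 : E →L[ℝ] E →L[ℝ] F) y := fun y hy =>
    (hasFDerivAt_const (f' y) y).congr_of_eventuallyEq (hloc y hy)
  have hconst : ∀ x ∈ Ω, f' x = f' a := fun x hx =>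
    hΩ.is_const_of_fderiv_eq_zero hconn
      (fun y hy => (hf'_deriv y hy).differentiableAt.differentiableWithinAt)
      (fun y hy => (hf'_deriv y hy).fderiv) hx ha
  exact hΩ.exists_eq_add_of_fderiv_eq hconn
    (fun x hx => (hderiv x hx).differentiableAt.differentiableWithinAt)
    (f' a).differentiableOn
    (fun x hx => by rw [(hderiv x hx).fderiv, (f' a).fderiv, hconst x hx])

theorem stmt_1 {d : ℕ} (Ω : Set (EuclideanSpace ℝ (Fin d)))
    (hΩ : IsOpen Ω) (hconn : IsConnected Ω)
    (f : EuclideanSpace ℝ (Fin d) → EuclideanSpace ℝ (Fin d))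
    (f' : EuclideanSpace ℝ (Fin d) → EuclideanSpace ℝ (Fin d) →L[ℝ] EuclideanSpace ℝ (Fin d))
    (hderiv : ∀ x ∈ Ω, HasFDerivAt f (f' x) x)
    (hcont : ContinuousOn f' Ω)
    (horth : ∀ x ∈ Ω, ∀ v w, ⟪f' x v, f' x w⟫ = ⟪v, w⟫) :
    ∃ (R : EuclideanSpace ℝ (Fin d) →L[ℝ] EuclideanSpace ℝ (Fin d))
      (b : EuclideanSpace ℝ (Fin d)),
      (∀ v w, ⟪R v, R w⟫ = ⟪v, w⟫) ∧ ∀ x ∈ Ω, f x = R x + b := by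
  obtain ⟨a, ha⟩ := hconn.nonempty
  obtain ⟨b, hb⟩ := hΩ.exists_eq_add_of_eventually_eq_fderiv hconn.isPreconnected hderiv
    (fun x hx => eventually_fderiv_eq_of_inner_map_map hΩ hderiv hcont horth hx) ha
  exact ⟨f' a, b, horth a ha, hb⟩
end

section
/- Let R : ℝ₊ → O(d) be a continuously differentiable map into orthogonal matrices with det R(r) = 1 for all r, let a ∈ ℝᵈ, and define h(s) = R(|s−a|)(s−a) + a for s ≠ a. Then det Dh(s) = 1 for all s ≠ a. -/
/-!
Write `r = |s - a|`. The chain rule gives `Dh(s) = R(r) + R'(r)(s - a) ⊗ (s - a)/r`; factoring out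
the orthogonal `R(r)`, the matrix determinant lemma yields
`det Dh(s) = det R(r) · (1 + r⁻¹ ⟨s - a, R(r)ᵀR'(r)(s - a)⟩)`. Differentiating `R(t)ᵀR(t) = 1`
shows that `R(r)ᵀR'(r)` is skew-symmetric, so the quadratic form vanishes.
-/

open Matrix

/-- The radius-dependent rotation map `h(s) = R(|s-a|)(s-a) + a`. -/
noncomputable def radialRot {d : ℕ} (R : ℝ → Matrix (Fin d) (Fin d) ℝ)
    (a : Fin d → ℝ) (s : Fin d → ℝ) : Fin d → ℝ :=
  (R (Real.sqrt (∑ i, (s i - a i) ^ 2))).mulVec (s - a) + a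

open Filter Topology

namespace Matrix

variable {n : Type*} [Fintype n]

theorem dotProduct_mulVec_self_eq_zero_of_transpose_eq_neg {α : Type*} [CommRing α]
    [NoZeroDivisors α] [CharZero α] {S : Matrix n n α} (hS : Sᵀ = -S) (v : n → α) :
    v ⬝ᵥ (S *ᵥ v) = 0 := by
  refine CharZero.eq_neg_self_iff.mp ?_
  calc v ⬝ᵥ (S *ᵥ v) = (Sᵀ *ᵥ v) ⬝ᵥ v := by rw [mulVec_transpose, dotProduct_mulVec]
    _ = -(v ⬝ᵥ (S *ᵥ v)) := by rw [hS, neg_mulVec, neg_dotProduct, dotProduct_comm]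

theorem det_add_vecMulVec_of_mul_transpose_eq_one [DecidableEq n] {α : Type*} [CommRing α]
    {A : Matrix n n α} (hA : A * Aᵀ = 1) (u v : n → α) :
    (A + vecMulVec u v).det = A.det * (1 + v ⬝ᵥ (Aᵀ *ᵥ u)) := by
  have hfactor : A + vecMulVec u v = A * (1 + vecMulVec (Aᵀ *ᵥ u) v) := by
    rw [Matrix.mul_add, Matrix.mul_one, mul_vecMulVec, mulVec_mulVec, hA, one_mulVec]
  rw [hfactor, det_mul, vecMulVec_eq Unit, det_one_add_replicateCol_mul_replicateRow]

end Matrix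

theorem transpose_mul_deriv_transpose_eq_neg {n : Type*} [Fintype n] [DecidableEq n]
    {R : ℝ → Matrix n n ℝ} {R' : Matrix n n ℝ} {r : ℝ}
    (horth : ∀ᶠ t in 𝓝 r, (R t)ᵀ * R t = 1)
    (hR : ∀ i j, HasDerivAt (fun t => R t i j) (R' i j) r) :
    ((R r)ᵀ * R')ᵀ = -((R r)ᵀ * R') := by
  ext i j
  have hprod : HasDerivAt (fun t => ((R t)ᵀ * R t) j i)
      (∑ k, (R' k j * R r k i + R r k j * R' k i)) r := by
    simp only [mul_apply, transpose_apply]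
    exact HasDerivAt.fun_sum fun k _ => (hR k j).mul (hR k i)
  have hconst : HasDerivAt (fun t => ((R t)ᵀ * R t) j i) 0 r :=
    (hasDerivAt_const r ((1 : Matrix n n ℝ) j i)).congr_of_eventuallyEq
      (horth.mono fun t ht => by simp only [ht])
  have hsum := hprod.unique hconst
  simp only [transpose_apply, Matrix.neg_apply, mul_apply]
  rw [eq_neg_iff_add_eq_zero, ← hsum, ← Finset.sum_add_distrib]
  exact Finset.sum_congr rfl fun k _ => by ring

theorem sum_sq_sub_pos {n : Type*} [Fintype n] {a s : n → ℝ} (hs : s ≠ a) :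
    0 < ∑ i, (s i - a i) ^ 2 := by
  obtain ⟨i, hi⟩ := Function.ne_iff.mp hs
  exact Finset.sum_pos' (fun j _ => sq_nonneg _)
    ⟨i, Finset.mem_univ i, sq_pos_of_ne_zero (sub_ne_zero.mpr hi)⟩

theorem hasFDerivAt_sqrt_sum_sq_sub {n : Type*} [Fintype n] {a s : n → ℝ} {r : ℝ}
    (hr : √(∑ i, (s i - a i) ^ 2) = r) (hs : s ≠ a) :
    HasFDerivAt (fun x => √(∑ i, (x i - a i) ^ 2))
      (∑ i, (r⁻¹ * (s i - a i)) • (ContinuousLinearMap.proj i : (n → ℝ) →L[ℝ] ℝ)) s := by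
  have hsq : HasFDerivAt (fun x => ∑ i, (x i - a i) ^ 2)
      (∑ i, (2 * (s i - a i)) • (ContinuousLinearMap.proj i : (n → ℝ) →L[ℝ] ℝ)) s := by
    refine HasFDerivAt.fun_sum fun i _ => ?_
    refine (((hasFDerivAt_apply (𝕜 := ℝ) i s).sub_const (a i)).pow 2).congr_fderiv ?_
    simp
  refine (hsq.sqrt (sum_sq_sub_pos hs).ne').congr_fderiv ?_
  ext w
  simp only [hr, one_div, _root_.mul_inv_rev, _root_.smul_apply, _root_.sum_apply,
    ContinuousLinearMap.proj_apply, smul_eq_mul, Finset.mul_sum]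
  exact Finset.sum_congr rfl fun i _ => by ring

theorem hasFDerivAt_radialRot {d : ℕ} {R : ℝ → Matrix (Fin d) (Fin d) ℝ}
    {R' : Matrix (Fin d) (Fin d) ℝ} {a s : Fin d → ℝ} {r : ℝ} (hr : √(∑ i, (s i - a i) ^ 2) = r) (hs : s ≠ a)
    (hR : ∀ i j, HasDerivAt (fun t => R t i j) (R' i j) r) :
    HasFDerivAt (radialRot R a)
      (toLin' (R r + vecMulVec (R' *ᵥ (s - a)) (r⁻¹ • (s - a)))).toContinuousLinearMap s := by
  set ρ' : (Fin d → ℝ) →L[ℝ] ℝ := ∑ k, (r⁻¹ * (s k - a k)) • ContinuousLinearMap.proj k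
  have hρ : HasFDerivAt (fun x => √(∑ k, (x k - a k) ^ 2)) ρ' s :=
    hasFDerivAt_sqrt_sum_sq_sub hr hs
  refine hasFDerivAt_pi'' fun i => ?_
  have hterm : ∀ j, HasFDerivAt (fun x => R (√(∑ k, (x k - a k) ^ 2)) i j * (x j - a j))
      (R r i j • ContinuousLinearMap.proj j + (s j - a j) • R' i j • ρ') s := fun j => by
    have := ((hR i j).comp_hasFDerivAt_of_eq s hρ hr.symm).fun_mul
      ((hasFDerivAt_apply (𝕜 := ℝ) j s).sub_const (a j))
    simpa only [Function.comp_apply, hr] using this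
  have hsum := (HasFDerivAt.fun_sum fun j (_ : j ∈ Finset.univ) => hterm j).add_const (a i)
  refine hsum.congr_fderiv ?_ |>.congr_of_eventuallyEq ?_
  · ext w
    simp only [ρ', Finset.sum_add_distrib, _root_.add_apply, _root_.sum_apply, _root_.smul_apply,
      ContinuousLinearMap.proj_apply, smul_eq_mul, ContinuousLinearMap.comp_apply,
      LinearMap.coe_toContinuousLinearMap', toLin'_apply, add_mulVec, Pi.add_apply, mulVec,
      dotProduct, vecMulVec_apply, Pi.smul_apply, Pi.sub_apply, add_right_inj, Finset.mul_sum,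
      Finset.sum_mul]
    rw [Finset.sum_comm]
    exact Finset.sum_congr rfl fun k _ => Finset.sum_congr rfl fun j _ => by ring
  · exact Eventually.of_forall fun x => by simp [radialRot, Matrix.mulVec, dotProduct]

theorem det_fderiv_radialRot {d : ℕ} {R : ℝ → Matrix (Fin d) (Fin d) ℝ}
    {R' : Matrix (Fin d) (Fin d) ℝ} {a s : Fin d → ℝ} {r : ℝ}
    (hr : √(∑ i, (s i - a i) ^ 2) = r) (hs : s ≠ a)
    (horth : ∀ᶠ t in 𝓝 r, (R t)ᵀ * R t = 1)
    (hR : ∀ i j, HasDerivAt (fun t => R t i j) (R' i j) r) :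
    LinearMap.det (fderiv ℝ (radialRot R a) s).toLinearMap = (R r).det := by
  have hskew := transpose_mul_deriv_transpose_eq_neg horth hR
  rw [(hasFDerivAt_radialRot hr hs hR).fderiv, LinearMap.coe_toContinuousLinearMap,
    LinearMap.det_toLin', det_add_vecMulVec_of_mul_transpose_eq_one
      (mul_eq_one_comm.mp horth.self_of_nhds), mulVec_mulVec, smul_dotProduct,
    dotProduct_mulVec_self_eq_zero_of_transpose_eq_neg hskew, smul_zero, add_zero, mul_one]

theorem stmt_7_general {d : ℕ} (R R' : ℝ → Matrix (Fin d) (Fin d) ℝ) (a : Fin d → ℝ)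
    (horth : ∀ r > (0 : ℝ), (R r)ᵀ * R r = 1)
    (hdet : ∀ r > (0 : ℝ), (R r).det = 1)
    (hderiv : ∀ r > (0 : ℝ), ∀ i j : Fin d, HasDerivAt (fun t => R t i j) (R' r i j) r)
    (s : Fin d → ℝ) (hs : s ≠ a) :
    LinearMap.det (fderiv ℝ (radialRot R a) s).toLinearMap = 1 := by
  have hr : 0 < √(∑ i, (s i - a i) ^ 2) := Real.sqrt_pos.mpr (sum_sq_sub_pos hs)
  rw [det_fderiv_radialRot rfl hs ((eventually_gt_nhds hr).mono horth) (hderiv _ hr), hdet _ hr]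

theorem stmt_7 {d : ℕ} (R R' : ℝ → Matrix (Fin d) (Fin d) ℝ) (a : Fin d → ℝ)
    (horth : ∀ r > (0 : ℝ), (R r)ᵀ * R r = 1)
    (hdet : ∀ r > (0 : ℝ), (R r).det = 1)
    (hderiv : ∀ r > (0 : ℝ), ∀ i j : Fin d, HasDerivAt (fun t => R t i j) (R' r i j) r)
    (hcont : ∀ i j : Fin d, ContinuousOn (fun r => R' r i j) (Set.Ioi (0 : ℝ)))
    (s : Fin d → ℝ) (hs : s ≠ a) :
    LinearMap.det (fderiv ℝ (radialRot R a) s).toLinearMap = 1 :=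
  stmt_7_general R R' a horth hdet hderiv s hs
end
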